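/- arXiv:0808.1060 — 6 statements merged into one kernel-verified Lean document; each statement's English description precedes it below -/
import Mathlib

section
/- Let J_1, …, J_N be nonempty subsets of Fin n, for each i let p(i) be the number of j with i ∈ J_j, and let p = min_i p(i) ≥ 1. For every real q > p there exist dimensions d : Fin n → ℕ with d i ≥ 1 such that, taking H_j = 0 for each j, Tr exp(Σ_{j=1}^N φ_{J_j}(0)) > Π_{j=1}^N (Tr exp(q • 0))^{1/q}; equivalently, Π_{i} (d i) > Π_{i} (d i)^{p(i)/q}. Hence the inequality of the tensor-product generalized Young inequality fails for every exponent q > p. -/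
/-! With all `H_j = 0` both sides only count dimensions: `Tr exp 0 = dim`, and regrouping
`∏_j ∏_{i ∈ J_j} (d i)^{1/q}` by `i` gives `∏_i (d i)^{p(i)/q}`. Taking `d = 2` at an index with
`p(i) = p` and `d = 1` elsewhere, the two sides become `2` and `2^{p/q} < 2`. -/

open scoped Classical

/-- The embedding `φ_J` of a matrix on `X_J = Π_{i ∈ J} Fin (d i)` into a matrix on
`X = Π_i Fin (d i)`, acting as the identity on the complementary factors. -/
noncomputable def emb {n : ℕ} (d : Fin n → ℕ) (J : Finset (Fin n))
    (H : Matrix (∀ i : J, Fin (d i)) (∀ i : J, Fin (d i)) ℂ) :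
    Matrix (∀ i, Fin (d i)) (∀ i, Fin (d i)) ℂ :=
  fun x y => if (∀ i, i ∉ J → x i = y i) then H (fun i => x i) (fun i => y i) else 0

open Finset

lemma emb_zero {n : ℕ} (d : Fin n → ℕ) (J : Finset (Fin n)) :
    emb d J (0 : Matrix (∀ i : J, Fin (d i)) (∀ i : J, Fin (d i)) ℂ) = 0 := by
  ext x y
  simp [emb]

lemma Matrix.trace_exp_zero_re {X : Type*} [Fintype X] [DecidableEq X] :
    (NormedSpace.exp (0 : Matrix X X ℂ)).trace.re = Fintype.card X := by
  simp [NormedSpace.exp_zero, Matrix.trace_one]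

lemma card_pi_fin_subtype {n : ℕ} (d : Fin n → ℕ) (s : Finset (Fin n)) :
    Fintype.card (∀ i : s, Fin (d i)) = ∏ i ∈ s, d i := by
  rw [Fintype.card_pi]
  simp only [Fintype.card_fin]
  exact prod_coe_sort s d

lemma trace_exp_sum_emb_zero_re {n N : ℕ} (d : Fin n → ℕ) (J : Fin N → Finset (Fin n)) :
    (NormedSpace.exp
        (∑ j, emb d (J j) (0 : Matrix (∀ i : J j, Fin (d i)) (∀ i : J j, Fin (d i)) ℂ))).trace.re =
      ∏ i, (d i : ℝ) := by
  simp only [emb_zero, sum_const_zero, Matrix.trace_exp_zero_re, Fintype.card_pi,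
    Fintype.card_fin]
  push_cast
  rfl

lemma trace_exp_smul_zero_re {n : ℕ} (d : Fin n → ℕ) (J : Finset (Fin n)) (q : ℝ) :
    (NormedSpace.exp (q • (0 : Matrix (∀ i : J, Fin (d i)) (∀ i : J, Fin (d i)) ℂ))).trace.re =
      ∏ i ∈ J, (d i : ℝ) := by
  rw [smul_zero, Matrix.trace_exp_zero_re, card_pi_fin_subtype]
  push_cast
  rfl

lemma prod_prod_eq_prod_pow_card {ι κ M : Type*} [Fintype ι] [Fintype κ] [DecidableEq ι]
    [CommMonoid M] (J : κ → Finset ι) (f : ι → M) :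
    ∏ j, ∏ i ∈ J j, f i = ∏ i, f i ^ #{j | i ∈ J j} := by
  rw [Finset.prod_comm' (t' := univ) (s' := fun i => {j | i ∈ J j}) (by simp)]
  simp only [prod_const]

lemma prod_prod_rpow_one_div {ι κ : Type*} [Fintype ι] [Fintype κ] [DecidableEq ι]
    (J : κ → Finset ι) (x : ι → ℝ) (hx : ∀ i, 0 ≤ x i) (q : ℝ) :
    ∏ j, (∏ i ∈ J j, x i) ^ (1 / q) = ∏ i, x i ^ ((#{j | i ∈ J j} : ℝ) / q) := by
  simp_rw [← Real.finsetProd_rpow _ _ (fun i _ => hx i), prod_prod_eq_prod_pow_card,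
    ← Real.rpow_mul_natCast (hx _), one_div_mul_eq_div]

lemma prod_mulSingle_rpow_lt {ι : Type*} [Fintype ι] [DecidableEq ι] {i₀ : ι} {x : ℕ}
    (hx : 1 < x) {c : ι → ℝ} (hc : c i₀ < 1) :
    ∏ i, ((Pi.mulSingle i₀ x : ι → ℕ) i : ℝ) ^ c i < ∏ i, ((Pi.mulSingle i₀ x : ι → ℕ) i : ℝ) := by
  rw [prod_eq_single i₀ (fun i _ hi => by simp [hi]) (by simp),
    prod_eq_single i₀ (fun i _ hi => by simp [hi]) (by simp), Pi.mulSingle_eq_same]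
  exact Real.rpow_lt_self_of_one_lt (by exact_mod_cast hx) hc

theorem tensor_product_generalized_young_fails_for_large_exponent_general {n N : ℕ}
    (J : Fin N → Finset (Fin n))
    (p : ℕ)
    (hattain : ∃ i : Fin n, p = (Finset.univ.filter (fun j => i ∈ J j)).card)
    (q : ℝ) (hq : (p : ℝ) < q) :
    ∃ d : Fin n → ℕ, (∀ i, 1 ≤ d i) ∧
      ((NormedSpace.exp
          (∑ j, emb d (J j) (0 : Matrix (∀ i : J j, Fin (d i)) (∀ i : J j, Fin (d i)) ℂ))).trace.re >
        ∏ j, ((NormedSpace.exp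
          (q • (0 : Matrix (∀ i : J j, Fin (d i)) (∀ i : J j, Fin (d i)) ℂ))).trace.re) ^ (1 / q)) ∧
      ((∏ i, (d i : ℝ)) >
        ∏ i, (d i : ℝ) ^ (((Finset.univ.filter (fun j => i ∈ J j)).card : ℝ) / q)) := by
  obtain ⟨i₀, hi₀⟩ := hattain
  have hq₀ : 0 < q := p.cast_nonneg.trans_lt hq
  have hdim : ∏ i, ((Pi.mulSingle i₀ 2 : Fin n → ℕ) i : ℝ) ^ ((#{j | i ∈ J j} : ℝ) / q) <
      ∏ i, ((Pi.mulSingle i₀ 2 : Fin n → ℕ) i : ℝ) :=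
    prod_mulSingle_rpow_lt one_lt_two (by rwa [← hi₀, div_lt_one hq₀])
  refine ⟨Pi.mulSingle i₀ 2, fun i => ?_, ?_, hdim⟩
  · by_cases h : i = i₀ <;> simp [h]
  · rw [trace_exp_sum_emb_zero_re]
    simp_rw [trace_exp_smul_zero_re]
    rw [prod_prod_rpow_one_div _ _ (fun i => Nat.cast_nonneg _)]
    exact hdim

/-- Failure of the tensor-product generalized Young inequality for any exponent `q > p`:
for every real `q > p` there are dimensions `d` such that, taking all `H_j = 0`,
`Tr exp (Σ_j φ_{J_j}(0)) > Π_j (Tr exp (q • 0))^{1/q}`; equivalently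
`Π_i d i > Π_i (d i)^{p(i)/q}`. -/
theorem tensor_product_generalized_young_fails_for_large_exponent {n N : ℕ} (hn : 1 ≤ n)
    (J : Fin N → Finset (Fin n)) (hJ : ∀ j, (J j).Nonempty)
    (p : ℕ)
    (hmin : ∀ i : Fin n, p ≤ (Finset.univ.filter (fun j => i ∈ J j)).card)
    (hattain : ∃ i : Fin n, p = (Finset.univ.filter (fun j => i ∈ J j)).card)
    (hp1 : 1 ≤ p)
    (q : ℝ) (hq : (p : ℝ) < q) :
    ∃ d : Fin n → ℕ, (∀ i, 1 ≤ d i) ∧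
      ((NormedSpace.exp
          (∑ j, emb d (J j) (0 : Matrix (∀ i : J j, Fin (d i)) (∀ i : J j, Fin (d i)) ℂ))).trace.re >
        ∏ j, ((NormedSpace.exp
          (q • (0 : Matrix (∀ i : J j, Fin (d i)) (∀ i : J j, Fin (d i)) ℂ))).trace.re) ^ (1 / q)) ∧
      ((∏ i, (d i : ℝ)) >
        ∏ i, (d i : ℝ) ^ (((Finset.univ.filter (fun j => i ∈ J j)).card : ℝ) / q)) :=
  tensor_product_generalized_young_fails_for_large_exponent_general J p hattain q hq
end

section
/- Let φ_j : Matrix (Fin m_j) ℂ → Matrix (Fin m) ℂ (j = 1,…,N) be unital star-algebra homomorphisms, let p_1,…,p_N ∈ [1,∞), and let C > 0. Suppose the non-commutative Brascamp–Lieb inequality holds: for all Hermitian H_j ∈ Matrix (Fin m_j) ℂ, Tr exp(Σ_{j=1}^N φ_j(H_j)) ≤ C · Π_{j=1}^N (Tr exp(p_j • H_j))^{1/p_j}. Then for every density matrix ρ ∈ Matrix (Fin m) ℂ and all density matrices ρ_j ∈ Matrix (Fin m_j) ℂ satisfying Tr(ρ_j A) = Tr(ρ · φ_j(A)) for all A ∈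 Matrix (Fin m_j) ℂ, one has Σ_{j=1}^N (1/p_j) S(ρ_j) ≥ S(ρ) − log C. -/
/-!
Gibbs' variational principle `S(ρ) + Re Tr(ρ K) ≤ log Re Tr exp K` is applied to
`K = ∑ j, φ j (H j)` with `H j = (p j)⁻¹ • log (ρj j + ε)`. The marginal condition turns
`Tr(ρ K)` into `∑ j, Tr(ρj j * H j) ≥ -∑ j, (p j)⁻¹ S(ρj j)`, and the Brascamp–Lieb inequality
bounds `Tr exp K` by `C * ∏ j, (1 + ε * mj j) ^ (1 / p j)`, which tends to `C` as `ε → 0`.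

In the eigenbases `u_i` of `ρ` and `v_j` of `K`, the variational principle is the scalar Gibbs
inequality weighted by the doubly stochastic matrix `|⟪u_i, v_j⟫|²`.
-/

open scoped Classical ComplexOrder

/-- The von Neumann entropy `S(ρ) = -Tr(ρ log ρ)` of a Hermitian matrix, computed via the
eigenvalues (with the convention `0 · log 0 = 0`, since `Real.log 0 = 0`). -/
noncomputable def vNEntropy {X : Type*} [Fintype X] [DecidableEq X] (ρ : Matrix X X ℂ) : ℝ :=
  if h : ρ.IsHermitian then -∑ i, (h.eigenvalues i) * Real.log (h.eigenvalues i) else 0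

open Matrix Unitary Filter Topology

namespace Real

lemma sub_le_mul_log_sub_log {x y : ℝ} (hx : 0 ≤ x) (hy : 0 < y) :
    x - y ≤ x * (log x - log y) := by
  rcases hx.eq_or_lt with rfl | hx
  · simpa using hy.le
  have h := mul_le_mul_of_nonneg_left (self_sub_one_le_mul_log (div_nonneg hx.le hy.le)) hy.le
  rw [log_div hx.ne' hy.ne'] at h
  field_simp at h
  linarith

/-- Summing `sub_le_mul_log_sub_log` with `y = exp (μ j) / Z` against `c`, the left-hand sides
add up to `1 - 1 = 0` because `c` is doubly stochastic. -/
theorem neg_sum_mul_log_add_sum_le_log_sum_exp {n : Type*} [Fintype n] [DecidableEq n]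
    {c : Matrix n n ℝ} (hc : c ∈ doublyStochastic ℝ n)
    {l : n → ℝ} (hl : ∀ i, 0 ≤ l i) (hl1 : ∑ i, l i = 1) (μ : n → ℝ) :
    -∑ i, l i * log (l i) + ∑ i, ∑ j, c i j * l i * μ j ≤ log (∑ j, exp (μ j)) := by
  have : Nonempty n := by
    by_contra h
    simp [not_nonempty_iff.1 h] at hl1
  set Z := ∑ j, exp (μ j)
  have hZ : 0 < Z := Finset.sum_pos (fun j _ => exp_pos _) Finset.univ_nonempty
  have key : ∑ i, ∑ j, c i j * (l i - exp (μ j) / Z) ≤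
      ∑ i, ∑ j, c i j * (l i * (log (l i) - (μ j - log Z))) := by
    gcongr with i _ j _
    · exact nonneg_of_mem_doublyStochastic hc
    · rw [show μ j - log Z = log (exp (μ j) / Z) by rw [log_div (exp_pos _).ne' hZ.ne', log_exp]]
      exact sub_le_mul_log_sub_log (hl i) (div_pos (exp_pos _) hZ)
  have hrow (i : n) (x : ℝ) : ∑ j, c i j * x = x := by
    rw [← Finset.sum_mul, sum_row_of_mem_doublyStochastic hc, one_mul]
  have hcol (j : n) (x : ℝ) : ∑ i, c i j * x = x := by
    rw [← Finset.sum_mul, sum_col_of_mem_doublyStochastic hc, one_mul]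
  have hZ1 : ∑ j, exp (μ j) / Z = 1 := by rw [← Finset.sum_div, div_self hZ.ne']
  simp only [mul_sub, Finset.sum_sub_distrib, hrow] at key
  rw [Finset.sum_comm (f := fun i j => c i j * (exp (μ j) / Z))] at key
  simp only [hcol, hZ1, ← Finset.sum_mul, hl1] at key
  simp only [mul_assoc]
  linarith

end Real

namespace Matrix
variable {n 𝕜 : Type*} [Fintype n] [DecidableEq n] [RCLike 𝕜]

lemma trace_conjStarAlgAut (u : unitary (Matrix n n 𝕜)) (A : Matrix n n 𝕜) :
    (conjStarAlgAut 𝕜 _ u A).trace = A.trace := by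
  rw [conjStarAlgAut_apply, trace_mul_cycle, Unitary.coe_star_mul_self, one_mul]

lemma exp_conjStarAlgAut (u : unitary (Matrix n n 𝕜)) (A : Matrix n n 𝕜) :
    NormedSpace.exp (conjStarAlgAut 𝕜 _ u A) = conjStarAlgAut 𝕜 _ u (NormedSpace.exp A) := by
  simpa using Matrix.exp_units_conj (Unitary.toUnits u) A

lemma norm_sq_mem_doublyStochastic (U : unitary (Matrix n n 𝕜)) :
    of (fun i j => ‖(U : Matrix n n 𝕜) i j‖ ^ 2) ∈ doublyStochastic ℝ n := by
  simp only [mem_doublyStochastic_iff_sum, of_apply]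
  refine ⟨fun i j => by positivity, fun i => ?_, fun j => ?_⟩
  · have h := congr_fun₂ (Unitary.coe_mul_star_self U) i i
    simp only [mul_apply, Unitary.coe_star, star_apply, one_apply_eq, RCLike.star_def,
      RCLike.mul_conj] at h
    exact_mod_cast h
  · have h := congr_fun₂ (Unitary.coe_star_mul_self U) j j
    simp only [mul_apply, star_apply, one_apply_eq, RCLike.star_def, RCLike.conj_mul] at h
    exact_mod_cast h

lemma trace_diagonal_mul_conjStarAlgAut_diagonal (a b : n → 𝕜) (W : unitary (Matrix n n 𝕜)) :
    (diagonal a * conjStarAlgAut 𝕜 _ W (diagonal b)).trace =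
      ∑ i, ∑ j, (‖(W : Matrix n n 𝕜) i j‖ ^ 2 : 𝕜) * a i * b j := by
  simp only [trace, diag_apply, diagonal_mul]
  refine Finset.sum_congr rfl fun i _ => ?_
  rw [conjStarAlgAut_apply, mul_apply, Finset.mul_sum]
  simp only [mul_diagonal, star_apply, RCLike.star_def, ← RCLike.mul_conj]
  refine Finset.sum_congr rfl fun j _ => ?_
  ring

namespace IsHermitian
variable {A B : Matrix n n 𝕜}

lemma trace_cfc (hA : A.IsHermitian) (f : ℝ → ℝ) :
    (cfc f A).trace = ∑ i, (f (hA.eigenvalues i) : 𝕜) := by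
  rw [hA.cfc_eq, IsHermitian.cfc, trace_conjStarAlgAut, trace_diagonal]
  rfl

lemma exp_cfc (hA : A.IsHermitian) (f : ℝ → ℝ) :
    NormedSpace.exp (cfc f A) = cfc (Real.exp ∘ f) A := by
  rw [hA.cfc_eq, hA.cfc_eq, IsHermitian.cfc, IsHermitian.cfc, exp_conjStarAlgAut, exp_diagonal]
  congr 2
  ext i
  simp [Real.exp_eq_exp_ℝ, NormedSpace.algebraMap_exp_comm]

lemma trace_exp (hA : A.IsHermitian) :
    (NormedSpace.exp A).trace = ∑ i, (Real.exp (hA.eigenvalues i) : 𝕜) := by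
  conv_lhs => rw [← cfc_id' ℝ A hA.isSelfAdjoint, hA.exp_cfc]
  exact hA.trace_cfc _

lemma trace_mul (hA : A.IsHermitian) (hB : B.IsHermitian) :
    (A * B).trace = ∑ i, ∑ j,
      ((‖((star hA.eigenvectorUnitary * hB.eigenvectorUnitary : unitary (Matrix n n 𝕜)) :
        Matrix n n 𝕜) i j‖ ^ 2 * hA.eigenvalues i * hB.eigenvalues j : ℝ) : 𝕜) := by
  have hV : hB.eigenvectorUnitary =
      hA.eigenvectorUnitary * (star hA.eigenvectorUnitary * hB.eigenvectorUnitary) := by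
    rw [Unitary.star_eq_inv, mul_inv_cancel_left]
  conv_lhs => rw [hA.spectral_theorem, hB.spectral_theorem, hV, conjStarAlgAut_mul_apply, ← map_mul,
    trace_conjStarAlgAut, trace_diagonal_mul_conjStarAlgAut_diagonal]
  push_cast
  rfl

end IsHermitian
end Matrix

theorem vNEntropy_add_re_trace_mul_le_log_re_trace_exp {n : Type*} [Fintype n] [DecidableEq n]
    {ρ K : Matrix n n ℂ} (hρ : ρ.PosSemidef) (hρ1 : ρ.trace = 1) (hK : K.IsHermitian) :
    vNEntropy ρ + (ρ * K).trace.re ≤ Real.log (NormedSpace.exp K).trace.re := by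
  have hsum : ∑ i, hρ.1.eigenvalues i = 1 := by
    simpa [hρ1, Complex.re_sum] using (congrArg Complex.re hρ.1.trace_eq_sum_eigenvalues).symm
  rw [vNEntropy, dif_pos hρ.1, hρ.1.trace_mul hK, hK.trace_exp]
  simp only [Complex.re_sum, Complex.coe_algebraMap, Complex.ofReal_re]
  exact Real.neg_sum_mul_log_add_sum_le_log_sum_exp (norm_sq_mem_doublyStochastic _)
    hρ.eigenvalues_nonneg hsum _

namespace Matrix.PosSemidef

variable {n : Type*} [Fintype n] [DecidableEq n] {ρ : Matrix n n ℂ}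

lemma trace_exp_cfc_log_add (hρ : ρ.PosSemidef) {ε : ℝ} (hε : 0 < ε) :
    (NormedSpace.exp (cfc (fun x => Real.log (x + ε)) ρ)).trace = ρ.trace + ε * Fintype.card n := by
  have hpos (i : n) : 0 < hρ.1.eigenvalues i + ε := by linarith [hρ.eigenvalues_nonneg i]
  rw [hρ.1.exp_cfc, hρ.1.trace_cfc, hρ.1.trace_eq_sum_eigenvalues]
  simp [Real.exp_log (hpos _), Finset.sum_add_distrib, mul_comm]

lemma neg_vNEntropy_le_re_trace_mul_cfc_log_add (hρ : ρ.PosSemidef) {ε : ℝ} (hε : 0 ≤ ε) :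
    -vNEntropy ρ ≤ (ρ * cfc (fun x => Real.log (x + ε)) ρ).trace.re := by
  have hmul : ρ * cfc (fun x => Real.log (x + ε)) ρ = cfc (fun x => x * Real.log (x + ε)) ρ := by
    rw [cfc_mul (fun x => x) _ ρ continuousOn_id (ρ.finite_real_spectrum.continuousOn _),
      cfc_id' ℝ ρ hρ.1.isSelfAdjoint]
  rw [hmul, hρ.1.trace_cfc, vNEntropy, dif_pos hρ.1, neg_neg]
  simp only [Complex.re_sum, Complex.coe_algebraMap, Complex.ofReal_re]
  refine Finset.sum_le_sum fun i _ => ?_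
  rcases (hρ.eigenvalues_nonneg i).eq_or_lt with h | h
  · simp [← h]
  · exact mul_le_mul_of_nonneg_left (Real.log_le_log h (by linarith)) h.le

/-- The witness is `p⁻¹ • log (ρ + ε)`; the shift by `ε` keeps the logarithm finite. -/
theorem exists_isHermitian_re_trace_exp_smul_eq (hρ : ρ.PosSemidef) (hρ1 : ρ.trace = 1)
    {p ε : ℝ} (hp : 0 < p) (hε : 0 < ε) :
    ∃ H : Matrix n n ℂ, H.IsHermitian ∧
      (NormedSpace.exp (p • H)).trace.re = 1 + ε * Fintype.card n ∧
      -(1 / p * vNEntropy ρ) ≤ (ρ * H).trace.re := by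
  refine ⟨(1 / p) • cfc (fun x => Real.log (x + ε)) ρ,
    (IsSelfAdjoint.isHermitian (cfc_predicate _ ρ)).smul (IsSelfAdjoint.all _), ?_, ?_⟩
  · rw [smul_smul, mul_one_div_cancel hp.ne', one_smul, hρ.trace_exp_cfc_log_add hε, hρ1]
    simp
  · rw [mul_smul_comm, trace_smul, Complex.smul_re, smul_eq_mul]
    have := mul_le_mul_of_nonneg_left (hρ.neg_vNEntropy_le_re_trace_mul_cfc_log_add hε.le)
      (one_div_pos.2 hp).le
    linarith

end Matrix.PosSemidef

theorem vNEntropy_add_sum_re_trace_le_log_of_le {ι : Type*} [Fintype ι] {d : ι → Type*}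
    [∀ j, Fintype (d j)] [∀ j, DecidableEq (d j)] {n : Type*} [Fintype n] [DecidableEq n]
    (φ : ∀ j, Matrix (d j) (d j) ℂ →⋆ₐ[ℂ] Matrix n n ℂ) {ρ : Matrix n n ℂ} (hρ : ρ.PosSemidef)
    (hρ1 : ρ.trace = 1) {ρj H : ∀ j, Matrix (d j) (d j) ℂ}
    (hmarg : ∀ j, (ρj j * H j).trace = (ρ * φ j (H j)).trace) (hH : ∀ j, (H j).IsHermitian)
    {B : ℝ} (hB : (NormedSpace.exp (∑ j, φ j (H j))).trace.re ≤ B) :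
    vNEntropy ρ + ∑ j, (ρj j * H j).trace.re ≤ Real.log B := by
  have hK : (∑ j, φ j (H j)).IsHermitian :=
    (isSelfAdjoint_sum _ fun j _ => (hH j).isSelfAdjoint.map (φ j)).isHermitian
  have : Nonempty n := by
    by_contra h
    rw [not_nonempty_iff] at h
    simp [trace_eq_zero_of_isEmpty] at hρ1
  have hpos : 0 < (NormedSpace.exp (∑ j, φ j (H j))).trace.re := by
    rw [hK.trace_exp]
    simp only [Complex.re_sum, Complex.coe_algebraMap, Complex.ofReal_re]
    exact Finset.sum_pos (fun i _ => Real.exp_pos _) Finset.univ_nonempty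
  calc vNEntropy ρ + ∑ j, (ρj j * H j).trace.re
      = vNEntropy ρ + (ρ * ∑ j, φ j (H j)).trace.re := by
        simp only [hmarg, Matrix.mul_sum, trace_sum, Complex.re_sum]
    _ ≤ Real.log (NormedSpace.exp (∑ j, φ j (H j))).trace.re :=
        vNEntropy_add_re_trace_mul_le_log_re_trace_exp hρ hρ1 hK
    _ ≤ Real.log B := Real.log_le_log hpos hB

/-- If the non-commutative Brascamp–Lieb inequality
`Tr exp (Σ_j φ_j(H_j)) ≤ C · Π_j (Tr exp (p_j • H_j))^{1/p_j}` holds for all Hermitian `H_j`,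
then the generalized subadditivity of entropy
`Σ_j (1/p_j) S(ρ_j) ≥ S(ρ) - log C` holds for every density matrix `ρ` with marginals `ρ_j`. -/
theorem subadditivity_of_entropy_of_brascamp_lieb {N m : ℕ} (mj : Fin N → ℕ)
    (φ : ∀ j, Matrix (Fin (mj j)) (Fin (mj j)) ℂ →⋆ₐ[ℂ] Matrix (Fin m) (Fin m) ℂ)
    (p : Fin N → ℝ) (hp : ∀ j, 1 ≤ p j) (C : ℝ) (hC : 0 < C)
    (hBL : ∀ H : ∀ j, Matrix (Fin (mj j)) (Fin (mj j)) ℂ, (∀ j, (H j).IsHermitian) →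
      (NormedSpace.exp (∑ j, φ j (H j))).trace.re ≤
        C * ∏ j, ((NormedSpace.exp (p j • H j)).trace.re) ^ (1 / p j))
    (ρ : Matrix (Fin m) (Fin m) ℂ) (hρ : ρ.PosSemidef) (hρ1 : ρ.trace = 1)
    (ρj : ∀ j, Matrix (Fin (mj j)) (Fin (mj j)) ℂ)
    (hρj : ∀ j, (ρj j).PosSemidef) (hρj1 : ∀ j, (ρj j).trace = 1)
    (hmarg : ∀ j, ∀ A : Matrix (Fin (mj j)) (Fin (mj j)) ℂ,
      (ρj j * A).trace = (ρ * φ j A).trace) :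
    ∑ j, (1 / p j) * vNEntropy (ρj j) ≥ vNEntropy ρ - Real.log C := by
  have hp0 (j : Fin N) : 0 < p j := one_pos.trans_le (hp j)
  have hbound : ∀ ε : ℝ, 0 < ε → vNEntropy ρ - ∑ j, (1 / p j) * vNEntropy (ρj j) ≤
      Real.log (C * ∏ j, (1 + ε * mj j) ^ (1 / p j)) := by
    intro ε hε
    choose H hH hexp hent using fun j =>
      (hρj j).exists_isHermitian_re_trace_exp_smul_eq (hρj1 j) (hp0 j) hε
    have hgibbs := vNEntropy_add_sum_re_trace_le_log_of_le φ hρ hρ1 (fun j => hmarg j (H j)) hH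
      (hBL H hH)
    simp only [hexp, Fintype.card_fin] at hgibbs
    have hsum := Finset.sum_le_sum fun j (_ : j ∈ Finset.univ) => hent j
    rw [Finset.sum_neg_distrib] at hsum
    linarith
  have hlim : Tendsto (fun ε : ℝ => Real.log (C * ∏ j, (1 + ε * mj j) ^ (1 / p j))) (𝓝[>] 0)
      (𝓝 (Real.log C)) := by
    have hcont : ContinuousAt (fun ε : ℝ => Real.log (C * ∏ j, (1 + ε * mj j) ^ (1 / p j))) 0 := by
      fun_prop (disch := simp [hC.ne'])
    simpa using hcont.tendsto.mono_left nhdsWithin_le_nhds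
  linarith [ge_of_tendsto hlim (eventually_nhdsWithin_of_forall hbound)]
end

section
/- Let ρ ∈ Matrix (Fin m) ℂ be a density matrix and H ∈ Matrix (Fin m) ℂ Hermitian. Then Tr(ρ H) − log Tr(exp H) ≤ Tr(ρ log ρ). Moreover, if ρ is positive definite, then equality holds if and only if H = log ρ + c • 1 for some real constant c. -/
open scoped Classical ComplexOrder

/-- The logarithm `log ρ` of a Hermitian matrix, defined by functional calculus on the
spectrum via the spectral decomposition (with the convention `log 0 = 0` on eigenvalues). -/
noncomputable def matLog {X : Type*} [Fintype X] [DecidableEq X] (ρ : Matrix X X ℂ) :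
    Matrix X X ℂ :=
  if h : ρ.IsHermitian then
    (h.eigenvectorUnitary : Matrix X X ℂ) *
      Matrix.diagonal (fun i => (Real.log (h.eigenvalues i) : ℂ)) *
      (star (h.eigenvectorUnitary : Matrix X X ℂ))
  else 0


/-!
Diagonalise `ρ = U diag(p) U*` and `H = V diag(h) V*`. The squared moduli
`aᵢⱼ = |(U* V)ᵢⱼ|²` form a doubly stochastic matrix, `Tr(ρH) = ∑ᵢⱼ aᵢⱼ pᵢ hⱼ` and
`Tr(exp H) = Z = ∑ⱼ exp hⱼ`. With the Gibbs weights `qⱼ = exp hⱼ / Z` the claim reads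
`∑ᵢⱼ aᵢⱼ pᵢ log qⱼ ≤ ∑ᵢ pᵢ log pᵢ`, and the defect equals `∑ᵢⱼ aᵢⱼ qⱼ klFun (pᵢ / qⱼ) ≥ 0`.
Equality forces `pᵢ = qⱼ`, i.e. `hⱼ = log pᵢ + log Z`, wherever `aᵢⱼ ≠ 0`; this is the
entrywise form of `(U* V) diag(h) = diag(log p + log Z) (U* V)`, i.e. of `H = log ρ + log Z`.
-/

open Matrix Real InformationTheory

section DoublyStochastic

variable {n : Type*} [Fintype n] [DecidableEq n]

lemma sum_eq_sum_of_mem_doublyStochastic {R : Type*} [Semiring R] [PartialOrder R]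
    [IsOrderedRing R] {a : Matrix n n R} (ha : a ∈ doublyStochastic R n) {x y : n → R}
    (hxy : ∀ i j, a i j ≠ 0 → x j = y i) : ∑ j, x j = ∑ i, y i := by
  have hterm (i j : n) : a i j * x j = a i j * y i := by
    by_cases hij : a i j = 0
    · simp [hij]
    · rw [hxy i j hij]
  calc ∑ j, x j = ∑ j, ∑ i, a i j * x j := by
        simp [← Finset.sum_mul, sum_col_of_mem_doublyStochastic ha]
    _ = ∑ i, ∑ j, a i j * y i := by rw [Finset.sum_comm]; simp only [hterm]
    _ = ∑ i, y i := by simp [← Finset.sum_mul, sum_row_of_mem_doublyStochastic ha]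

lemma mul_klFun_div_eq {p q : ℝ} (hp : 0 ≤ p) (hq : 0 < q) :
    q * klFun (p / q) = p * log p - p * log q - p + q := by
  rcases hp.eq_or_lt with rfl | hp
  · simp [klFun_apply]
  · rw [klFun_apply, log_div hp.ne' hq.ne']
    field_simp
    ring

variable {a : Matrix n n ℝ} {p q : n → ℝ}

lemma mul_mul_klFun_div_nonneg (ha : a ∈ doublyStochastic ℝ n) (hp : ∀ i, 0 ≤ p i)
    (hq : ∀ j, 0 < q j) (i j : n) : 0 ≤ a i j * (q j * klFun (p i / q j)) :=
  mul_nonneg (nonneg_of_mem_doublyStochastic ha)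
    (mul_nonneg (hq j).le (klFun_nonneg (div_nonneg (hp i) (hq j).le)))

lemma sum_mul_log_sub_sum_sum_eq_sum_sum_klFun (ha : a ∈ doublyStochastic ℝ n)
    (hp : ∀ i, 0 ≤ p i) (hq : ∀ j, 0 < q j) (hpq : ∑ i, p i = ∑ j, q j) :
    ∑ i, p i * log (p i) - ∑ i, ∑ j, a i j * (p i * log (q j)) =
      ∑ i, ∑ j, a i j * (q j * klFun (p i / q j)) := by
  have hrow (x : n → ℝ) : ∑ i, ∑ j, a i j * x i = ∑ i, x i := by
    simp [← Finset.sum_mul, sum_row_of_mem_doublyStochastic ha]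
  have hcol : ∑ i, ∑ j, a i j * q j = ∑ j, q j := by
    rw [Finset.sum_comm]
    simp [← Finset.sum_mul, sum_col_of_mem_doublyStochastic ha]
  simp only [mul_klFun_div_eq (hp _) (hq _), mul_add, mul_sub, Finset.sum_add_distrib,
    Finset.sum_sub_distrib, hrow, hcol, hpq]
  ring

theorem sum_sum_mul_mul_log_le (ha : a ∈ doublyStochastic ℝ n)
    (hp : ∀ i, 0 ≤ p i) (hq : ∀ j, 0 < q j) (hpq : ∑ i, p i = ∑ j, q j) :
    ∑ i, ∑ j, a i j * (p i * log (q j)) ≤ ∑ i, p i * log (p i) := by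
  have hdefect := sum_mul_log_sub_sum_sum_eq_sum_sum_klFun ha hp hq hpq
  have hnonneg : 0 ≤ ∑ i, ∑ j, a i j * (q j * klFun (p i / q j)) :=
    Finset.sum_nonneg fun i _ ↦ Finset.sum_nonneg fun j _ ↦
      mul_mul_klFun_div_nonneg ha hp hq i j
  linarith

theorem sum_sum_mul_mul_log_eq_iff (ha : a ∈ doublyStochastic ℝ n)
    (hp : ∀ i, 0 ≤ p i) (hq : ∀ j, 0 < q j) (hpq : ∑ i, p i = ∑ j, q j) :
    ∑ i, ∑ j, a i j * (p i * log (q j)) = ∑ i, p i * log (p i) ↔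
      ∀ i j, a i j ≠ 0 → p i = q j := by
  have hterm := mul_mul_klFun_div_nonneg ha hp hq
  rw [← sub_eq_zero, ← neg_eq_zero, neg_sub,
    sum_mul_log_sub_sum_sum_eq_sum_sum_klFun ha hp hq hpq,
    Finset.sum_eq_zero_iff_of_nonneg fun i _ ↦ Finset.sum_nonneg fun j _ ↦ hterm i j]
  simp only [Finset.mem_univ, true_implies,
    Finset.sum_eq_zero_iff_of_nonneg fun j _ ↦ hterm _ j]
  refine forall₂_congr fun i j ↦ ?_
  rw [mul_eq_zero, mul_eq_zero, or_iff_not_imp_left,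
    klFun_eq_zero_iff (div_nonneg (hp i) (hq j).le), div_eq_one_iff_eq (hq j).ne',
    or_iff_right (hq j).ne']

lemma exists_eq_log_add_iff_eq_exp_div (ha : a ∈ doublyStochastic ℝ n)
    (hp : ∀ i, 0 < p i) (hp1 : ∑ i, p i = 1) (h : n → ℝ) :
    (∃ c : ℝ, ∀ i j, a i j ≠ 0 → h j = log (p i) + c) ↔
      ∀ i j, a i j ≠ 0 → p i = exp (h j) / ∑ k, exp (h k) := by
  constructor
  · rintro ⟨c, hc⟩ i j hij
    have hexp (i j) (hij : a i j ≠ 0) : exp (h j) = p i * exp c := by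
      rw [hc i j hij, exp_add, exp_log (hp i)]
    rw [sum_eq_sum_of_mem_doublyStochastic ha hexp, ← Finset.sum_mul, hp1, one_mul,
      hexp i j hij, mul_div_cancel_right₀ _ (exp_pos c).ne']
  · intro hpq
    refine ⟨log (∑ k, exp (h k)), fun i j hij ↦ ?_⟩
    have hZ : 0 < ∑ k, exp (h k) :=
      Finset.sum_pos (fun k _ ↦ exp_pos _) (Finset.univ_nonempty_iff.2 ⟨i⟩)
    rw [hpq i j hij, log_div (exp_pos _).ne' hZ.ne', log_exp, sub_add_cancel]

end DoublyStochastic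

section UnitaryConj

variable {n R : Type*} [Fintype n] [DecidableEq n] [CommRing R] [StarRing R]

local notation "conj" => Unitary.conjStarAlgAut R (Matrix n n R)

lemma Matrix.trace_conjStarAlgAut_s4 (u : unitaryGroup n R) (A : Matrix n n R) :
    (conj u A).trace = A.trace := by
  rw [Unitary.conjStarAlgAut_apply, trace_mul_cycle, Unitary.coe_star_mul_self, one_mul]

lemma Matrix.trace_conjStarAlgAut_mul_conjStarAlgAut (u v : unitaryGroup n R)
    (A B : Matrix n n R) : (conj u A * conj v B).trace = (A * conj (star u * v) B).trace := by
  have hv : v = u * (star u * v) := by simp [← mul_assoc]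
  rw [hv, Unitary.conjStarAlgAut_mul_apply, ← map_mul, trace_conjStarAlgAut_s4, ← hv]

lemma Matrix.conjStarAlgAut_eq_conjStarAlgAut_iff (u v : unitaryGroup n R)
    (A B : Matrix n n R) :
    conj v B = conj u A ↔
      (star u * v : unitaryGroup n R) * B = A * (star u * v : unitaryGroup n R) := by
  set w := star u * v
  have hv : v = u * w := by simp [w, ← mul_assoc]
  rw [hv, Unitary.conjStarAlgAut_mul_apply, EmbeddingLike.apply_eq_iff_eq,
    Unitary.conjStarAlgAut_apply]
  constructor
  · rintro rfl
    rw [mul_assoc, Unitary.coe_star_mul_self, mul_one]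
  · intro h
    rw [h, mul_assoc, Unitary.mul_star_self_of_mem w.2, mul_one]

end UnitaryConj

lemma Matrix.mul_diagonal_eq_diagonal_mul_iff {n R : Type*} [Fintype n] [DecidableEq n]
    [CommRing R] [NoZeroDivisors R] (A : Matrix n n R) (d e : n → R) :
    A * diagonal e = diagonal d * A ↔ ∀ i j, A i j ≠ 0 → e j = d i := by
  simp only [← Matrix.ext_iff, mul_diagonal, diagonal_mul, mul_comm (d _)]
  refine forall₂_congr fun i j ↦ ?_
  rw [← sub_eq_zero, ← mul_sub, mul_eq_zero, sub_eq_zero, or_iff_not_imp_left]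

section Complex

variable {n : Type*} [Fintype n] [DecidableEq n]

local notation "conj" => Unitary.conjStarAlgAut ℂ (Matrix n n ℂ)

lemma Matrix.sum_normSq_row_of_mem_unitaryGroup (u : unitaryGroup n ℂ) (i : n) :
    ∑ j, Complex.normSq ((u : Matrix n n ℂ) i j) = 1 := by
  have h := congrFun (congrFun (mem_unitaryGroup_iff.1 u.2) i) i
  simp only [mul_apply, star_apply, one_apply_eq, RCLike.star_def, Complex.mul_conj] at h
  exact_mod_cast h

lemma Matrix.map_normSq_mem_doublyStochastic (u : unitaryGroup n ℂ) :
    (u : Matrix n n ℂ).map Complex.normSq ∈ doublyStochastic ℝ n := by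
  refine mem_doublyStochastic_iff_sum.2 ⟨fun i j ↦ Complex.normSq_nonneg _,
    sum_normSq_row_of_mem_unitaryGroup u, fun j ↦ ?_⟩
  simpa [Unitary.coe_star] using sum_normSq_row_of_mem_unitaryGroup (star u) j

lemma Matrix.trace_diagonal_mul_mul_diagonal_mul_star (A : Matrix n n ℂ) (d e : n → ℂ) :
    (diagonal d * A * diagonal e * star A).trace =
      ∑ i, ∑ j, d i * e j * Complex.normSq (A i j) := by
  refine Finset.sum_congr rfl fun i _ ↦ ?_
  rw [diag_apply, mul_apply]
  refine Finset.sum_congr rfl fun j _ ↦ ?_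
  rw [mul_diagonal, diagonal_mul, star_apply, RCLike.star_def, ← Complex.mul_conj]
  ring

lemma Matrix.exp_conjStarAlgAut_s4 (u : unitaryGroup n ℂ) (A : Matrix n n ℂ) :
    NormedSpace.exp (conj u A) = conj u (NormedSpace.exp A) := by
  have hinv : (u : Matrix n n ℂ)⁻¹ = star (u : Matrix n n ℂ) :=
    inv_eq_left_inv (Unitary.coe_star_mul_self u)
  simpa only [Unitary.conjStarAlgAut_apply, hinv] using
    exp_conj (u : Matrix n n ℂ) A Unitary.isUnit_coe

variable {A B : Matrix n n ℂ}

lemma Matrix.IsHermitian.trace_mul_s4 (hA : A.IsHermitian) (hB : B.IsHermitian) :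
    (A * B).trace = ((∑ i, ∑ j, Complex.normSq
      ((star hA.eigenvectorUnitary * hB.eigenvectorUnitary : unitaryGroup n ℂ) i j) *
        (hA.eigenvalues i * hB.eigenvalues j) : ℝ) : ℂ) := by
  conv_lhs => rw [hA.spectral_theorem, hB.spectral_theorem]
  rw [trace_conjStarAlgAut_mul_conjStarAlgAut, Unitary.conjStarAlgAut_apply, ← mul_assoc,
    ← mul_assoc, trace_diagonal_mul_mul_diagonal_mul_star]
  push_cast
  simp [mul_comm]

lemma Matrix.IsHermitian.trace_exp_s4 (hA : A.IsHermitian) :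
    (NormedSpace.exp A).trace = ((∑ i, Real.exp (hA.eigenvalues i) : ℝ) : ℂ) := by
  conv_lhs => rw [hA.spectral_theorem]
  rw [exp_conjStarAlgAut_s4, trace_conjStarAlgAut_s4, exp_diagonal, trace_diagonal]
  push_cast
  simp [← Complex.exp_eq_exp_ℂ]

lemma Matrix.IsHermitian.sum_eigenvalues_eq_one (hA : A.IsHermitian) (hA1 : A.trace = 1) :
    ∑ i, hA.eigenvalues i = 1 := by
  have htrace := hA.trace_eq_sum_eigenvalues.symm.trans hA1
  rwa [← RCLike.ofReal_sum, ← RCLike.ofReal_one, RCLike.ofReal_inj] at htrace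

lemma Matrix.IsHermitian.re_trace_mul_sub_log_re_trace_exp (hA : A.IsHermitian)
    (hB : B.IsHermitian) (hA1 : ∑ i, hA.eigenvalues i = 1) :
    (A * B).trace.re - log (NormedSpace.exp B).trace.re =
      ∑ i, ∑ j, Complex.normSq
        ((star hA.eigenvectorUnitary * hB.eigenvectorUnitary : unitaryGroup n ℂ) i j) *
          (hA.eigenvalues i *
            log (Real.exp (hB.eigenvalues j) / ∑ k, Real.exp (hB.eigenvalues k))) := by
  have hZ : 0 < ∑ k, Real.exp (hB.eigenvalues k) := Finset.sum_pos (fun k _ ↦ exp_pos _)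
    (Finset.nonempty_of_sum_ne_zero (hA1.trans_ne one_ne_zero))
  rw [hA.trace_mul_s4 hB, hB.trace_exp_s4, Complex.ofReal_re, Complex.ofReal_re]
  simp only [log_div (exp_pos _).ne' hZ.ne', log_exp, mul_sub, Finset.sum_sub_distrib,
    ← mul_assoc, ← Finset.sum_mul, sum_normSq_row_of_mem_unitaryGroup, one_mul, hA1]

lemma Matrix.IsHermitian.matLog_add_smul_one (hA : A.IsHermitian) (c : ℝ) :
    matLog A + (c : ℂ) • 1 =
      conj hA.eigenvectorUnitary
        (diagonal (RCLike.ofReal ∘ fun i ↦ log (hA.eigenvalues i) + c)) := by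
  have hsplit : diagonal (RCLike.ofReal ∘ fun i ↦ log (hA.eigenvalues i) + c) =
      diagonal (fun i ↦ (log (hA.eigenvalues i) : ℂ)) + (c : ℂ) • (1 : Matrix n n ℂ) := by
    rw [smul_one_eq_diagonal, diagonal_add]
    simp [Function.comp_def]
  rw [hsplit, map_add, map_smul, map_one, matLog, dif_pos hA, Unitary.conjStarAlgAut_apply]

end Complex

/-- For a density matrix `ρ` and a Hermitian `H`,
`Tr(ρH) - log Tr(exp H) ≤ Tr(ρ log ρ)`; if `ρ` is positive definite then equality holds
if and only if `H = log ρ + c • 1` for some real `c`. -/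
theorem trace_sub_log_trace_exp_le_neg_entropy {m : ℕ}
    (ρ H : Matrix (Fin m) (Fin m) ℂ)
    (hρ : ρ.PosSemidef) (hρ1 : ρ.trace = 1) (hH : H.IsHermitian) :
    ((ρ * H).trace.re - Real.log (NormedSpace.exp H).trace.re ≤ -vNEntropy ρ) ∧
    (ρ.PosDef →
      ((ρ * H).trace.re - Real.log (NormedSpace.exp H).trace.re = -vNEntropy ρ ↔
        ∃ c : ℝ, H = matLog ρ + (c : ℂ) • (1 : Matrix (Fin m) (Fin m) ℂ))) := by
  have hρH : ρ.IsHermitian := hρ.isHermitian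
  set p := hρH.eigenvalues
  set h := hH.eigenvalues
  set w := star hρH.eigenvectorUnitary * hH.eigenvectorUnitary
  set a := (w : Matrix (Fin m) (Fin m) ℂ).map Complex.normSq
  have ha : a ∈ doublyStochastic ℝ (Fin m) := map_normSq_mem_doublyStochastic w
  have hp1 : ∑ i, p i = 1 := hρH.sum_eigenvalues_eq_one hρ1
  set Z := ∑ j, exp (h j)
  have hZ : 0 < Z := Finset.sum_pos (fun j _ ↦ exp_pos _)
    (Finset.nonempty_of_sum_ne_zero (hp1.trans_ne one_ne_zero))
  have hq (j) : 0 < exp (h j) / Z := div_pos (exp_pos _) hZ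
  have hpq : ∑ i, p i = ∑ j, exp (h j) / Z := by rw [hp1, ← Finset.sum_div, div_self hZ.ne']
  rw [hρH.re_trace_mul_sub_log_re_trace_exp hH hp1, vNEntropy, dif_pos hρH, neg_neg]
  refine ⟨sum_sum_mul_mul_log_le ha hρ.eigenvalues_nonneg hq hpq,
    fun hρpos ↦ (sum_sum_mul_mul_log_eq_iff ha hρ.eigenvalues_nonneg hq hpq).trans ?_⟩
  rw [← exists_eq_log_add_iff_eq_exp_div ha hρpos.eigenvalues_pos hp1]
  refine exists_congr fun c ↦ ?_
  conv_rhs => rw [hρH.matLog_add_smul_one, hH.spectral_theorem]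
  rw [conjStarAlgAut_eq_conjStarAlgAut_iff, mul_diagonal_eq_diagonal_mul_iff]
  simp only [a, map_apply, ne_eq, map_eq_zero, Function.comp_apply, Complex.coe_algebraMap,
    Complex.ofReal_inj]
  rfl
end

section
/- Let V_1,…,V_N be nonzero subspaces of EuclideanSpace ℝ (Fin n) with orthogonal projections P_1,…,P_N, and let p_1,…,p_N ∈ [1,∞). Suppose there exists a finite constant C such that for all measurable functions f_j : EuclideanSpace ℝ (Fin n) → [0,∞] (j = 1,…,N): ∫ Π_{j=1}^N f_j(P_j x) dγ_n(x) ≤ C · Π_{j=1}^N ( ∫ f_j(P_j x)^{p_j} dγ_n(x) )^{1/p_j}. Then Σ_{j=1}^N (1/p_j) P_j ≤ I in the Loewner order. -/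
/-!
Test the inequality on the exponentials `f_j z = exp ⟪a_j, z⟫`. Their Gaussian integrals are
computed by completing the square, and give
`exp (‖∑ P_j a_j‖² / 2) ≤ C * exp (∑ p_j ‖P_j a_j‖² / 2)`. Replacing `a_j` by `t • a_j` and
letting `t → ∞` removes `C`: `‖∑ P_j a_j‖² ≤ ∑ p_j ‖P_j a_j‖²`. For `a_j = x / p_j` and
`u = ∑ P_j x / p_j` this reads `‖u‖² ≤ ⟪u, x⟫`, and then `⟪u, x⟫ ≤ ‖x‖²` since `0 ≤ ‖x - u‖²`.
-/

open MeasureTheory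
open scoped ENNReal

/-- The standard Gaussian probability measure on `EuclideanSpace ℝ (Fin n)`. -/
noncomputable def stdGaussian (n : ℕ) : Measure (EuclideanSpace ℝ (Fin n)) :=
  volume.withDensity
    (fun x => ENNReal.ofReal ((2 * Real.pi) ^ (-(n : ℝ) / 2) * Real.exp (-‖x‖ ^ 2 / 2)))

open Real Finset
open scoped RealInnerProductSpace

noncomputable def stdGaussianDensity (n : ℕ) (x : EuclideanSpace ℝ (Fin n)) : ℝ :=
  (2 * π) ^ (-(n : ℝ) / 2) * exp (-‖x‖ ^ 2 / 2)

section Gaussian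

variable {n : ℕ}

lemma stdGaussian_eq_withDensity :
    stdGaussian n = volume.withDensity fun x => ENNReal.ofReal (stdGaussianDensity n x) := rfl

lemma stdGaussianDensity_nonneg (x : EuclideanSpace ℝ (Fin n)) : 0 ≤ stdGaussianDensity n x := by
  unfold stdGaussianDensity; positivity

lemma integral_stdGaussianDensity : ∫ x, stdGaussianDensity n x = 1 := by
  have hexp : ∀ x : EuclideanSpace ℝ (Fin n), exp (-‖x‖ ^ 2 / 2) = exp (-(1 / 2) * ‖x‖ ^ 2) :=
    fun x => by ring_nf
  simp only [stdGaussianDensity, integral_const_mul, hexp]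
  rw [GaussianFourier.integral_rexp_neg_mul_sq_norm (by norm_num), finrank_euclideanSpace_fin,
    show π / (1 / 2) = 2 * π by ring, ← rpow_add (by positivity), neg_div, neg_add_cancel,
    rpow_zero]

lemma lintegral_stdGaussianDensity : ∫⁻ x, ENNReal.ofReal (stdGaussianDensity n x) = 1 := by
  rw [← ofReal_integral_eq_lintegral_ofReal
      (.of_integral_ne_zero (by simp [integral_stdGaussianDensity]))
      (.of_forall stdGaussianDensity_nonneg),
    integral_stdGaussianDensity, ENNReal.ofReal_one]

lemma stdGaussianDensity_mul_exp_inner (w v : EuclideanSpace ℝ (Fin n)) :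
    stdGaussianDensity n v * exp ⟪w, v⟫ = exp (‖w‖ ^ 2 / 2) * stdGaussianDensity n (v - w) := by
  have hsq : -‖v‖ ^ 2 / 2 + ⟪w, v⟫ = ‖w‖ ^ 2 / 2 + -‖v - w‖ ^ 2 / 2 := by
    rw [norm_sub_sq_real, real_inner_comm]; ring
  simp only [stdGaussianDensity]
  rw [mul_assoc, ← exp_add, hsq, exp_add]
  ring

lemma lintegral_exp_inner_stdGaussian (w : EuclideanSpace ℝ (Fin n)) :
    ∫⁻ v, ENNReal.ofReal (exp ⟪w, v⟫) ∂stdGaussian n = ENNReal.ofReal (exp (‖w‖ ^ 2 / 2)) := by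
  have hmeas : Measurable fun x => ENNReal.ofReal (stdGaussianDensity n x) := by
    unfold stdGaussianDensity; fun_prop
  rw [stdGaussian_eq_withDensity, lintegral_withDensity_eq_lintegral_mul _ hmeas (by fun_prop)]
  simp only [Pi.mul_apply, ← ENNReal.ofReal_mul (stdGaussianDensity_nonneg _),
    stdGaussianDensity_mul_exp_inner]
  rw [lintegral_congr fun v => ENNReal.ofReal_mul (exp_pos _).le,
    lintegral_const_mul' _ _ ENNReal.ofReal_ne_top,
    lintegral_sub_right_eq_self (fun v => ENNReal.ofReal (stdGaussianDensity n v)) w,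
    lintegral_stdGaussianDensity, mul_one]

end Gaussian

lemma ENNReal.ofReal_exp_rpow (a p : ℝ) :
    ENNReal.ofReal (exp a) ^ p = ENNReal.ofReal (exp (a * p)) := by
  rw [ENNReal.ofReal_rpow_of_pos (exp_pos a), exp_mul]

lemma lintegral_exp_inner_rpow_stdGaussian {n : ℕ} (w : EuclideanSpace ℝ (Fin n)) (p : ℝ) :
    (∫⁻ v, ENNReal.ofReal (exp ⟪w, v⟫) ^ p ∂stdGaussian n) ^ (1 / p) =
      ENNReal.ofReal (exp (p * ‖w‖ ^ 2 / 2)) := by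
  simp_rw [ENNReal.ofReal_exp_rpow, mul_comm _ p, ← real_inner_smul_left,
    lintegral_exp_inner_stdGaussian, ENNReal.ofReal_exp_rpow, norm_smul, mul_pow, norm_eq_abs,
    sq_abs]
  congr 2
  linear_combination ‖w‖ ^ 2 / 2 * mul_self_mul_inv p

lemma le_of_forall_exp_mul_le_mul_exp_mul {a b C : ℝ}
    (h : ∀ s, 0 ≤ s → exp (s * a) ≤ C * exp (s * b)) : a ≤ b := by
  have hC : 1 ≤ C := by simpa using h 0 le_rfl
  by_contra! hba
  have hδ : 0 < a - b := sub_pos.mpr hba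
  have hs := h (C / (a - b)) (by positivity)
  rw [show C / (a - b) * a = C / (a - b) * (a - b) + C / (a - b) * b by ring, exp_add,
    div_mul_cancel₀ C hδ.ne', mul_le_mul_iff_left₀ (exp_pos _)] at hs
  linarith [add_one_le_exp C]

lemma inner_le_sq_norm_of_sq_norm_le_inner {E : Type*} [NormedAddCommGroup E]
    [InnerProductSpace ℝ E] {u x : E} (h : ‖u‖ ^ 2 ≤ ⟪u, x⟫) : ⟪u, x⟫ ≤ ‖x‖ ^ 2 := by
  nlinarith [norm_sub_sq_real x u, real_inner_comm u x, sq_nonneg ‖x - u‖]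

lemma Submodule.inner_starProjection_self {E : Type*} [NormedAddCommGroup E]
    [InnerProductSpace ℝ E] (K : Submodule ℝ E) [K.HasOrthogonalProjection] (x : E) :
    ⟪K.starProjection x, x⟫ = ‖K.starProjection x‖ ^ 2 := by
  simpa using K.re_inner_starProjection_eq_normSq x

def IsGaussianBrascampLiebConstant {ι : Type*} [Fintype ι] {n : ℕ}
    (V : ι → Submodule ℝ (EuclideanSpace ℝ (Fin n))) (p : ι → ℝ) (C : ℝ≥0∞) : Prop :=
  ∀ f : ι → EuclideanSpace ℝ (Fin n) → ℝ≥0∞, (∀ j, Measurable (f j)) →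
    ∫⁻ x, ∏ j, f j ((V j).starProjection x) ∂stdGaussian n ≤
      C * ∏ j, (∫⁻ x, f j ((V j).starProjection x) ^ p j ∂stdGaussian n) ^ (1 / p j)

namespace IsGaussianBrascampLiebConstant

variable {ι : Type*} [Fintype ι] {n : ℕ} {V : ι → Submodule ℝ (EuclideanSpace ℝ (Fin n))}
  {p : ι → ℝ} {C : ℝ≥0∞}

lemma exp_half_sq_norm_sum_le (hBL : IsGaussianBrascampLiebConstant V p C) (hC : C ≠ ⊤)
    (a : ι → EuclideanSpace ℝ (Fin n)) :
    exp (‖∑ j, (V j).starProjection (a j)‖ ^ 2 / 2) ≤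
      C.toReal * exp (∑ j, p j * ‖(V j).starProjection (a j)‖ ^ 2 / 2) := by
  have hsymm : ∀ j y, ⟪a j, (V j).starProjection y⟫ = ⟪(V j).starProjection (a j), y⟫ :=
    fun j y => ((V j).inner_starProjection_left_eq_right _ _).symm
  have h := hBL (fun j z => ENNReal.ofReal (exp ⟪a j, z⟫)) fun j => by fun_prop
  simp only [hsymm, lintegral_exp_inner_rpow_stdGaussian,
    ← ENNReal.ofReal_prod_of_nonneg fun j _ => (exp_pos _).le, ← exp_sum, ← sum_inner,
    lintegral_exp_inner_stdGaussian] at h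
  have h' := ENNReal.toReal_mono (ENNReal.mul_ne_top hC ENNReal.ofReal_ne_top) h
  rwa [ENNReal.toReal_mul, ENNReal.toReal_ofReal (exp_pos _).le,
    ENNReal.toReal_ofReal (exp_pos _).le] at h'

lemma sq_norm_sum_starProjection_le (hBL : IsGaussianBrascampLiebConstant V p C) (hC : C ≠ ⊤)
    (b : ι → EuclideanSpace ℝ (Fin n)) :
    ‖∑ j, (V j).starProjection (b j)‖ ^ 2 ≤ ∑ j, p j * ‖(V j).starProjection (b j)‖ ^ 2 := by
  suffices ‖∑ j, (V j).starProjection (b j)‖ ^ 2 / 2 ≤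
      ∑ j, p j * ‖(V j).starProjection (b j)‖ ^ 2 / 2 by
    rwa [← sum_div, div_le_div_iff_of_pos_right two_pos] at this
  refine le_of_forall_exp_mul_le_mul_exp_mul (C := C.toReal) fun s hs => ?_
  have hscale : ∀ v : EuclideanSpace ℝ (Fin n), ‖√s • v‖ ^ 2 = s * ‖v‖ ^ 2 := fun v => by
    rw [norm_smul, mul_pow, norm_eq_abs, sq_abs, sq_sqrt hs]
  convert hBL.exp_half_sq_norm_sum_le hC (fun j => √s • b j) using 3
  · simp_rw [map_smul, ← smul_sum, hscale]
    ring
  · simp_rw [map_smul, hscale, mul_sum]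
    exact sum_congr rfl fun j _ => by ring

end IsGaussianBrascampLiebConstant

theorem gaussian_brascamp_lieb_necessity_general {n N : ℕ}
    (V : Fin N → Submodule ℝ (EuclideanSpace ℝ (Fin n)))
    (p : Fin N → ℝ)
    (C : ℝ≥0∞) (hC : C ≠ ⊤)
    (hBL : ∀ f : ∀ _ : Fin N, EuclideanSpace ℝ (Fin n) → ℝ≥0∞, (∀ j, Measurable (f j)) →
      ∫⁻ x, ∏ j, f j ((V j).orthogonalProjection x : EuclideanSpace ℝ (Fin n))
          ∂(stdGaussian n) ≤
        C * ∏ j, (∫⁻ x, (f j ((V j).orthogonalProjection x : EuclideanSpace ℝ (Fin n))) ^ (p j)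
          ∂(stdGaussian n)) ^ (1 / p j)) :
    ∀ x : EuclideanSpace ℝ (Fin n),
      ∑ j, (1 / p j) * ‖((V j).orthogonalProjection x : EuclideanSpace ℝ (Fin n))‖ ^ 2 ≤
        ‖x‖ ^ 2 := by
  intro x
  have hBL' : IsGaussianBrascampLiebConstant V p C := hBL
  set u := ∑ j, (1 / p j) • (V j).starProjection x
  have hux : ⟪u, x⟫ = ∑ j, 1 / p j * ‖(V j).starProjection x‖ ^ 2 := by
    simp only [u, sum_inner, real_inner_smul_left, Submodule.inner_starProjection_self]
  have hu : ‖u‖ ^ 2 ≤ ⟪u, x⟫ := by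
    have h := hBL'.sq_norm_sum_starProjection_le hC fun j => (1 / p j) • x
    simp only [map_smul, norm_smul, mul_pow, norm_eq_abs, sq_abs] at h
    rw [hux]
    convert h using 2 with j
    have := mul_self_mul_inv (p j)⁻¹
    rw [inv_inv] at this
    linear_combination -‖(V j).starProjection x‖ ^ 2 * this
  exact hux ▸ inner_le_sq_norm_of_sq_norm_le_inner hu

/-- Necessity of the Loewner condition in the Gaussian Brascamp–Lieb inequality: if a
finite constant `C` makes
`∫ Π_j f_j(P_j x) dγ_n ≤ C · Π_j (∫ f_j(P_j x)^{p_j} dγ_n)^{1/p_j}`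
hold for all measurable `f_j : EuclideanSpace ℝ (Fin n) → [0,∞]`, then
`Σ_j (1/p_j) P_j ≤ I` in the Loewner order. -/
theorem gaussian_brascamp_lieb_necessity {n N : ℕ}
    (V : Fin N → Submodule ℝ (EuclideanSpace ℝ (Fin n)))
    (hV : ∀ j, V j ≠ ⊥)
    (p : Fin N → ℝ) (hp : ∀ j, 1 ≤ p j)
    (C : ℝ≥0∞) (hC : C ≠ ⊤)
    (hBL : ∀ f : ∀ _ : Fin N, EuclideanSpace ℝ (Fin n) → ℝ≥0∞, (∀ j, Measurable (f j)) →
      ∫⁻ x, ∏ j, f j ((V j).orthogonalProjection x : EuclideanSpace ℝ (Fin n))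
          ∂(stdGaussian n) ≤
        C * ∏ j, (∫⁻ x, (f j ((V j).orthogonalProjection x : EuclideanSpace ℝ (Fin n))) ^ (p j)
          ∂(stdGaussian n)) ^ (1 / p j)) :
    ∀ x : EuclideanSpace ℝ (Fin n),
      ∑ j, (1 / p j) * ‖((V j).orthogonalProjection x : EuclideanSpace ℝ (Fin n))‖ ^ 2 ≤
        ‖x‖ ^ 2 :=
  gaussian_brascamp_lieb_necessity_general V p C hC hBL
end

section
/- Let P_1,…,P_N be orthogonal projections onto subspaces of EuclideanSpace ℝ (Fin n) and let p_1,…,p_N ∈ [1,∞) satisfy Σ_{j=1}^N (1/p_j) P_j ≤ I in the Loewner order. Then for every a with ‖a‖ < 1: Σ_{j=1}^N (1/p_j) · ‖P_j a‖² / (1 − ‖P_j a‖²) ≤ ‖a‖² / (1 − ‖a‖²). -/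
/-! Since `r ↦ 1 / (1 - r)` is increasing and `‖P_j a‖² ≤ ‖a‖² =: s`, each term is
at most `(1/p_j) ‖P_j a‖² / (1 - s)`; summing and using `Σ_j (1/p_j) ‖P_j a‖² ≤ s` gives `s / (1 - s)`. -/

theorem Finset.sum_mul_div_one_sub_le {ι : Type*} (t : Finset ι) {c r : ι → ℝ} {s : ℝ}
    (hc : ∀ j ∈ t, 0 ≤ c j) (hr : ∀ j ∈ t, 0 ≤ r j) (hrs : ∀ j ∈ t, r j ≤ s) (hs : s < 1)
    (hsum : ∑ j ∈ t, c j * r j ≤ s) :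
    ∑ j ∈ t, c j * (r j / (1 - r j)) ≤ s / (1 - s) := by
  have hs' : 0 < 1 - s := sub_pos.2 hs
  calc ∑ j ∈ t, c j * (r j / (1 - r j))
      ≤ ∑ j ∈ t, c j * r j / (1 - s) := by
        refine Finset.sum_le_sum fun j hj => ?_
        rw [mul_div_assoc]
        gcongr
        · exact hc j hj
        · exact hr j hj
        · exact hrs j hj
    _ = (∑ j ∈ t, c j * r j) / (1 - s) := (Finset.sum_div ..).symm
    _ ≤ s / (1 - s) := by gcongr

/-- If the orthogonal projections `P_j` onto the subspaces `V_j` satisfy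
`Σ_j (1/p_j) P_j ≤ I` in the Loewner order, then for every `a` with `‖a‖ < 1`,
`Σ_j (1/p_j) ‖P_j a‖² / (1 - ‖P_j a‖²) ≤ ‖a‖² / (1 - ‖a‖²)`. -/
theorem rational_subadditivity {n N : ℕ}
    (V : Fin N → Submodule ℝ (EuclideanSpace ℝ (Fin n)))
    (p : Fin N → ℝ) (hp : ∀ j, 1 ≤ p j)
    (hLoewner : ∀ x : EuclideanSpace ℝ (Fin n),
      ∑ j, (1 / p j) * ‖((V j).orthogonalProjection x : EuclideanSpace ℝ (Fin n))‖ ^ 2 ≤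
        ‖x‖ ^ 2)
    (a : EuclideanSpace ℝ (Fin n)) (ha : ‖a‖ < 1) :
    ∑ j, (1 / p j) *
        (‖((V j).orthogonalProjection a : EuclideanSpace ℝ (Fin n))‖ ^ 2 /
          (1 - ‖((V j).orthogonalProjection a : EuclideanSpace ℝ (Fin n))‖ ^ 2)) ≤
      ‖a‖ ^ 2 / (1 - ‖a‖ ^ 2) := by
  refine Finset.univ.sum_mul_div_one_sub_le (fun j _ => ?_) (fun j _ => sq_nonneg _)
    (fun j _ => ?_) ?_ (hLoewner a)
  · exact one_div_nonneg.2 (zero_le_one.trans (hp j))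
  · exact pow_le_pow_left₀ (norm_nonneg _) ((V j).norm_orthogonalProjectionOnto_apply_le a) 2
  · exact pow_lt_one₀ (norm_nonneg a) ha two_ne_zero
end

section
/- Let u_1,…,u_N be unit vectors in EuclideanSpace ℝ (Fin n) and let p_1,…,p_N ∈ [1,∞) be such that Σ_{j=1}^N (1/p_j) (u_j ⊗ u_j) ≤ I in the Loewner order, where u_j ⊗ u_j denotes the orthogonal projection onto the span of u_j (the rank-one map x ↦ ⟨u_j, x⟩ u_j). Then for every b = (b_1,…,b_N) ∈ ℝ^N: log cosh( ‖Σ_{j=1}^N b_j u_j‖ ) ≤ Σ_{j=1}^N (1/p_j) · log cosh(p_j b_j). -/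
/-!
Put `c_j = ⟪u_j, x⟫` for a vector `x` with `‖x‖ ≤ 1` and `⟪S, x⟫ = ‖S‖`, where `S = Σ b_j u_j`.
Then `‖S‖ = Σ b_j c_j`, `|c_j| ≤ 1`, and the Loewner condition says `Σ c_j² / p_j ≤ 1`.
Writing `b_j c_j = (c_j² / p_j) (p_j b_j / c_j)`, Jensen's inequality for the convex function
`f = log ∘ cosh`, which vanishes at `0`, with these subprobability weights gives
`f ‖S‖ ≤ Σ (c_j² / p_j) f (p_j b_j / c_j)`. Each term is at most `f (p_j b_j) / p_j` because
`c² f (a / c) ≤ f a` for `|c| ≤ 1`, i.e. `f s / s²` is nonincreasing on `(0, ∞)`; differentiating,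
this amounts to `s tanh s ≤ 2 f s`, which in turn follows from `s ≤ sinh s cosh s`.
-/

open scoped RealInnerProductSpace
open Real

lemma exists_norm_le_one_inner_eq_norm {E : Type*} [NormedAddCommGroup E]
    [InnerProductSpace ℝ E] (v : E) : ∃ x : E, ‖x‖ ≤ 1 ∧ ⟪v, x⟫ = ‖v‖ := by
  refine ⟨‖v‖⁻¹ • v, ?_, ?_⟩
  · rw [norm_smul, norm_inv, norm_norm]
    exact inv_mul_le_one_of_le₀ le_rfl (norm_nonneg v)
  · rw [real_inner_smul_right, real_inner_self_eq_norm_sq, sq, ← mul_assoc, inv_mul_mul_self]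

lemma ConvexOn.map_sum_le_of_sum_le_one {ι E : Type*} [AddCommGroup E] [Module ℝ E]
    {s : Set E} {f : E → ℝ} (hf : ConvexOn ℝ s f) (h0 : 0 ∈ s) (hf0 : f 0 = 0)
    {t : Finset ι} {w : ι → ℝ} {y : ι → E} (hw : ∀ i ∈ t, 0 ≤ w i)
    (hw1 : ∑ i ∈ t, w i ≤ 1) (hy : ∀ i ∈ t, y i ∈ s) :
    f (∑ i ∈ t, w i • y i) ≤ ∑ i ∈ t, w i * f (y i) := by
  simpa [hf0] using hf.map_add_sum_le hw (v := 1 - ∑ i ∈ t, w i) (by ring) hy (by linarith) h0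

namespace Real

lemma hasDerivAt_log_cosh (x : ℝ) : HasDerivAt (fun x => log (cosh x)) (tanh x) x := by
  simpa [tanh_eq_sinh_div_cosh] using (hasDerivAt_cosh x).log (cosh_pos x).ne'

lemma hasDerivAt_tanh (x : ℝ) : HasDerivAt tanh (cosh x ^ 2)⁻¹ x := by
  have h := (hasDerivAt_sinh x).div (hasDerivAt_cosh x) (cosh_pos x).ne'
  have htanh : sinh / cosh = tanh := funext fun y => (tanh_eq_sinh_div_cosh y).symm
  rwa [← sq, ← sq, cosh_sq_sub_sinh_sq, one_div, htanh] at h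

lemma convexOn_log_cosh : ConvexOn ℝ Set.univ fun x => log (cosh x) :=
  convexOn_of_hasDerivWithinAt2_nonneg convex_univ
    (fun x _ => (hasDerivAt_log_cosh x).continuousAt.continuousWithinAt)
    (fun x _ => (hasDerivAt_log_cosh x).hasDerivWithinAt)
    (fun x _ => (hasDerivAt_tanh x).hasDerivWithinAt) (fun x _ => by positivity)

lemma mul_tanh_le_two_mul_log_cosh {s : ℝ} (hs : 0 ≤ s) : s * tanh s ≤ 2 * log (cosh s) := by
  let F : ℝ → ℝ := fun s => 2 * log (cosh s) - s * tanh s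
  have hF : ∀ s, HasDerivAt F (tanh s - s * (cosh s ^ 2)⁻¹) s := fun s => by
    refine (((hasDerivAt_log_cosh s).const_mul 2).sub
      ((hasDerivAt_id' s).mul (hasDerivAt_tanh s))).congr_deriv ?_
    ring
  have hmono : MonotoneOn F (Set.Ici 0) := by
    refine monotoneOn_of_hasDerivWithinAt_nonneg (convex_Ici 0)
      (fun s _ => (hF s).continuousAt.continuousWithinAt) (fun s _ => (hF s).hasDerivWithinAt)
      fun s hs => ?_
    rw [interior_Ici] at hs
    have hs_le : s ≤ sinh s * cosh s := by
      nlinarith [self_le_sinh_iff.2 hs.le, one_le_cosh s, sinh_nonneg_iff.2 hs.le]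
    rw [tanh_eq_sinh_div_cosh, sub_nonneg, ← div_eq_mul_inv,
      div_le_div_iff₀ (by positivity) (cosh_pos s)]
    nlinarith [cosh_pos s]
  simpa [F] using hmono Set.self_mem_Ici hs hs

lemma sq_mul_log_cosh_div_le_of_nonneg {a c : ℝ} (ha : 0 ≤ a) (hc : 0 < c) (hc1 : c ≤ 1) :
    c ^ 2 * log (cosh (a / c)) ≤ log (cosh a) := by
  let g : ℝ → ℝ := fun t => t ^ 2 * log (cosh (a / t))
  have hg : ∀ t ≠ 0, HasDerivAt g (t * (2 * log (cosh (a / t)) - a / t * tanh (a / t))) t :=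
    fun t ht => by
      have hdiv : HasDerivAt (fun t => a / t) (-(a / t ^ 2)) t := by
        simpa [div_eq_mul_inv] using (hasDerivAt_inv ht).const_mul a
      refine ((hasDerivAt_pow 2 t).mul
        ((hasDerivAt_log_cosh (a / t)).comp t hdiv)).congr_deriv ?_
      simp only [Function.comp_apply]
      field_simp
      ring
  have hmono : MonotoneOn g (Set.Ioi 0) := by
    refine monotoneOn_of_hasDerivWithinAt_nonneg (convex_Ioi 0)
      (fun t ht => (hg t (ne_of_gt ht)).continuousAt.continuousWithinAt)
      (fun t ht => (hg t (ne_of_gt (interior_subset ht))).hasDerivWithinAt) fun t ht => ?_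
    rw [interior_Ioi] at ht
    have := mul_tanh_le_two_mul_log_cosh (div_nonneg ha ht.le)
    exact mul_nonneg ht.le (by linarith)
  simpa [g] using hmono hc (Set.mem_Ioi.2 one_pos) hc1

lemma sq_mul_log_cosh_div_le (a : ℝ) {c : ℝ} (hc : |c| ≤ 1) :
    c ^ 2 * log (cosh (a / c)) ≤ log (cosh a) := by
  rw [← sq_abs c, ← cosh_abs (a / c), abs_div, ← cosh_abs a]
  rcases (abs_nonneg c).eq_or_lt with h | h
  · simpa [← h] using log_nonneg (one_le_cosh |a|)
  · exact sq_mul_log_cosh_div_le_of_nonneg (abs_nonneg a) h hc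

theorem log_cosh_sum_mul_le {ι : Type*} [Fintype ι] (b c p : ι → ℝ) (hp : ∀ j, 0 < p j)
    (hc : ∀ j, |c j| ≤ 1) (hcp : ∑ j, 1 / p j * c j ^ 2 ≤ 1) :
    log (cosh (∑ j, b j * c j)) ≤ ∑ j, 1 / p j * log (cosh (p j * b j)) := by
  have hp' : ∀ j, 0 ≤ 1 / p j := fun j => one_div_nonneg.2 (hp j).le
  -- for `c j = 0` both sides vanish, as `p j * b j / 0 = 0`
  have hbc : ∀ j, b j * c j = (1 / p j * c j ^ 2) * (p j * b j / c j) := fun j => by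
    rcases eq_or_ne (c j) 0 with h | h
    · simp [h]
    · field_simp [(hp j).ne']
  calc log (cosh (∑ j, b j * c j))
      = log (cosh (∑ j, (1 / p j * c j ^ 2) • (p j * b j / c j))) := by
        simp only [smul_eq_mul, ← hbc]
    _ ≤ ∑ j, (1 / p j * c j ^ 2) * log (cosh (p j * b j / c j)) :=
        convexOn_log_cosh.map_sum_le_of_sum_le_one (Set.mem_univ 0) (by simp)
          (fun j _ => mul_nonneg (hp' j) (sq_nonneg _)) hcp (fun j _ => Set.mem_univ _)
    _ ≤ ∑ j, 1 / p j * log (cosh (p j * b j)) := Finset.sum_le_sum fun j _ => by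
        rw [mul_assoc]
        exact mul_le_mul_of_nonneg_left (sq_mul_log_cosh_div_le _ (hc j)) (hp' j)

end Real

/-- One-dimensional Brascamp–Lieb inequality for the hyperbolic cosine: if the unit vectors
`u_j` and exponents `p_j ∈ [1,∞)` satisfy `Σ_j (1/p_j) u_j ⊗ u_j ≤ I` in the Loewner order
(i.e. `Σ_j (1/p_j) ⟪u_j, x⟫² ≤ ‖x‖²` for all `x`), then
`log cosh ‖Σ_j b_j u_j‖ ≤ Σ_j (1/p_j) log cosh (p_j b_j)` for all `b ∈ ℝ^N`. -/
theorem log_cosh_brascamp_lieb {n N : ℕ}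
    (u : Fin N → EuclideanSpace ℝ (Fin n)) (hu : ∀ j, ‖u j‖ = 1)
    (p : Fin N → ℝ) (hp : ∀ j, 1 ≤ p j)
    (hLoewner : ∀ x : EuclideanSpace ℝ (Fin n),
      ∑ j, (1 / p j) * ⟪u j, x⟫ ^ 2 ≤ ‖x‖ ^ 2)
    (b : Fin N → ℝ) :
    Real.log (Real.cosh ‖∑ j, b j • u j‖) ≤
      ∑ j, (1 / p j) * Real.log (Real.cosh (p j * b j)) := by
  obtain ⟨x, hx, hSx⟩ := exists_norm_le_one_inner_eq_norm (∑ j, b j • u j)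
  have hS : ‖∑ j, b j • u j‖ = ∑ j, b j * ⟪u j, x⟫ := by
    simp only [← hSx, sum_inner, real_inner_smul_left]
  rw [hS]
  refine log_cosh_sum_mul_le b _ p (fun j => zero_lt_one.trans_le (hp j)) (fun j => ?_)
    ((hLoewner x).trans (pow_le_one₀ (norm_nonneg x) hx))
  exact (abs_real_inner_le_norm (u j) x).trans (by rw [hu j, one_mul]; exact hx)
end
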